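/- Let ε₁ and c₂ = 4m(10^m+1) be the constants from the Gram–Schmidt angle lemma. If H_1, H_2 ∈ G(n,m) satisfy 0 < ∠(H_1,H_2) = α < ε₁, then there exists an (m−1)-dimensional subspace W ⊂ H_1 such that π_{H_1}(S(H_1,H_2)) ⊂ {y ∈ H_1 : dist(y,W) ≤ 5c₂/α}, where S(H_1,H_2) = {y ∈ ℝ^n : dist(y,H_i) ≤ 1 for i=1,2}. -/

import Mathlib

/-- The orthogonal projection onto a subspace of Euclidean space, viewed as a
continuous linear endomorphism of the ambient space. -/
noncomputable def projL {n : ℕ} (X : Submodule ℝ (EuclideanSpace ℝ (Fin n))) :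
    EuclideanSpace ℝ (Fin n) →L[ℝ] EuclideanSpace ℝ (Fin n) :=
  X.subtypeL.comp (X.orthogonalProjectionOnto)

/-!
Let `Q` be the orthogonal projection onto `H₂ᗮ` and let `e` be a unit vector of `H₁` maximising
`β = ‖Q e‖`. The first variation at this maximum gives `⟪Q x, Q e⟫ = ⟪x, e⟫ β²` for `x ∈ H₁`.
For `y ∈ S` and `x = π_{H₁} y` the left side is at most `2β`, since `y` lies within distance one
of both subspaces, so `π_{H₁} y` lies within `2/β` of the hyperplane `W = eᗮ ⊓ H₁` of `H₁`.
It remains to see `α ≤ 3β`. Write `π_{H₁} - π_{H₂} = π_{H₁} Q - π_{H₁ᗮ} π_{H₂}`; the first term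
has the norm of its adjoint `Q π_{H₁}`, at most `β`. Because `dim H₁ = dim H₂` and `β < 1`,
`π_{H₂}` maps `H₁` onto `H₂`, which bounds the second term by `β / (1 - β)`.
-/

open scoped RealInnerProductSpace
open Module

theorem eq_zero_of_forall_two_mul_le_sq_mul {c K : ℝ} (h : ∀ t : ℝ, 2 * t * c ≤ t ^ 2 * K) :
    c = 0 := by
  obtain ⟨s, rfl⟩ : ∃ s, c = s * (|K| + 1) := ⟨c / (|K| + 1), by field_simp⟩
  have hs : s ^ 2 * (|K| + 2) ≤ 0 := by nlinarith [h s, le_abs_self K, sq_nonneg s]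
  have hs0 : s = 0 := by nlinarith [sq_nonneg s, abs_nonneg K]
  rw [hs0, zero_mul]

section

variable {E F : Type*} [NormedAddCommGroup E] [InnerProductSpace ℝ E]
  [NormedAddCommGroup F] [InnerProductSpace ℝ F]

theorem exists_unit_forall_norm_apply_le (U : Submodule ℝ E) [FiniteDimensional ℝ U]
    (hU : U ≠ ⊥) (T : E →L[ℝ] F) :
    ∃ e ∈ U, ‖e‖ = 1 ∧ ∀ x ∈ U, ‖T x‖ ≤ ‖T e‖ * ‖x‖ := by
  have : Nontrivial U := Submodule.nontrivial_iff_ne_bot.mpr hU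
  obtain ⟨e, he, hmax⟩ := (isCompact_sphere (0 : U) 1).exists_isMaxOn
    (NormedSpace.sphere_nonempty.mpr zero_le_one)
    (T.continuous.comp continuous_subtype_val).norm.continuousOn
  have hnorm : ‖T ∘L U.subtypeL‖ ≤ ‖T e‖ :=
    (T ∘L U.subtypeL).opNorm_le_of_unit_norm (norm_nonneg _) fun x hx =>
      hmax (mem_sphere_zero_iff_norm.mpr hx)
  refine ⟨e, e.2, by simpa using he, fun x hx => ?_⟩
  calc ‖T x‖ = ‖(T ∘L U.subtypeL) ⟨x, hx⟩‖ := rfl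
    _ ≤ ‖T ∘L U.subtypeL‖ * ‖x‖ := (T ∘L U.subtypeL).le_opNorm _
    _ ≤ ‖T e‖ * ‖x‖ := by gcongr

theorem inner_apply_apply_eq_of_forall_norm_apply_le {U : Submodule ℝ E} {T : E →L[ℝ] F}
    {e : E} (he : e ∈ U) (he1 : ‖e‖ = 1) (hmax : ∀ x ∈ U, ‖T x‖ ≤ ‖T e‖ * ‖x‖)
    {x : E} (hx : x ∈ U) : ⟪T x, T e⟫ = ⟪x, e⟫ * ‖T e‖ ^ 2 := by
  set w := x - ⟪x, e⟫ • e with hw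
  have hwU : w ∈ U := U.sub_mem hx (U.smul_mem _ he)
  have hwe : ⟪w, e⟫ = 0 := by
    rw [hw, inner_sub_left, real_inner_smul_left, real_inner_self_eq_norm_sq, he1]; ring
  have hTw : ⟪T w, T e⟫ = 0 := by
    refine eq_zero_of_forall_two_mul_le_sq_mul (K := ‖T e‖ ^ 2 * ‖w‖ ^ 2 - ‖T w‖ ^ 2) fun t => ?_
    have h := pow_le_pow_left₀ (norm_nonneg _)
      (hmax (e + t • w) (U.add_mem he (U.smul_mem t hwU))) 2
    rw [mul_pow, map_add, map_smul, norm_add_sq_real, norm_add_sq_real, real_inner_smul_right,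
      real_inner_smul_right, real_inner_comm w e, hwe, he1] at h
    simp only [norm_smul, Real.norm_eq_abs, mul_pow, sq_abs] at h
    rw [real_inner_comm]
    linarith
  have hx' : x = w + ⟪x, e⟫ • e := by rw [hw]; abel
  rw [hx', map_add, map_smul, inner_add_left, hTw, real_inner_smul_left,
    real_inner_self_eq_norm_sq, inner_add_left, hwe, real_inner_smul_left,
    real_inner_self_eq_norm_sq, he1]
  ring

namespace Submodule

theorem infDist_eq_norm_starProjection_orthogonal (K : Submodule ℝ E)
    [K.HasOrthogonalProjection] (y : E) : Metric.infDist y K = ‖Kᗮ.starProjection y‖ := by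
  rw [Metric.infDist_eq_iInf, starProjection_orthogonal_val, starProjection_minimal]
  simp only [dist_eq_norm]
  rfl

theorem opNorm_comp_starProjection_le (K : Submodule ℝ E) [K.HasOrthogonalProjection]
    (T : E →L[ℝ] F) {C : ℝ} (hC : 0 ≤ C) (h : ∀ x ∈ K, ‖T x‖ ≤ C * ‖x‖) :
    ‖T ∘L K.starProjection‖ ≤ C :=
  ContinuousLinearMap.opNorm_le_bound _ hC fun x =>
    (h _ (K.starProjection_apply_mem x)).trans (by gcongr; exact K.norm_starProjection_apply_le x)

theorem norm_starProjection_comp_starProjection_comm [CompleteSpace E] (U V : Submodule ℝ E)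
    [U.HasOrthogonalProjection] [V.HasOrthogonalProjection] :
    ‖U.starProjection ∘L V.starProjection‖ = ‖V.starProjection ∘L U.starProjection‖ := by
  rw [← ContinuousLinearMap.adjoint.norm_map, ContinuousLinearMap.adjoint_comp,
    (isSelfAdjoint_starProjection U).adjoint_eq, (isSelfAdjoint_starProjection V).adjoint_eq]

theorem norm_starProjection_sub_starProjection_le [CompleteSpace E] {U V : Submodule ℝ E}
    [U.HasOrthogonalProjection] [V.HasOrthogonalProjection] {C D : ℝ} (hC : 0 ≤ C) (hD : 0 ≤ D)
    (hU : ∀ x ∈ U, ‖Vᗮ.starProjection x‖ ≤ C * ‖x‖)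
    (hV : ∀ x ∈ V, ‖Uᗮ.starProjection x‖ ≤ D * ‖x‖) :
    ‖U.starProjection - V.starProjection‖ ≤ C + D := by
  have hsplit : U.starProjection - V.starProjection =
      U.starProjection ∘L Vᗮ.starProjection - Uᗮ.starProjection ∘L V.starProjection := by
    rw [starProjection_orthogonal', starProjection_orthogonal']
    ext x
    simp
  calc ‖U.starProjection - V.starProjection‖
      ≤ ‖Vᗮ.starProjection ∘L U.starProjection‖ + ‖Uᗮ.starProjection ∘L V.starProjection‖ := by
        rw [hsplit, ← norm_starProjection_comp_starProjection_comm]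
        exact norm_sub_le _ _
    _ ≤ C + D := add_le_add (opNorm_comp_starProjection_le U _ hC hU)
        (opNorm_comp_starProjection_le V _ hD hV)

section FiniteDimensional

variable {U V : Submodule ℝ E} [FiniteDimensional ℝ U] [FiniteDimensional ℝ V]

theorem surjOn_starProjection_of_finrank_eq (hdim : finrank ℝ U = finrank ℝ V) {β : ℝ}
    (hβ : β < 1) (hU : ∀ x ∈ U, ‖Vᗮ.starProjection x‖ ≤ β * ‖x‖) :
    Set.SurjOn V.starProjection U V := by
  set L : U →ₗ[ℝ] V := V.orthogonalProjectionOnto.toLinearMap ∘ₗ U.subtype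
  have hinj : Function.Injective L := by
    refine (injective_iff_map_eq_zero L).mpr fun z hz => ?_
    have hz' := hU z z.2
    rw [starProjection_orthogonal_val, show V.starProjection z = 0 from congrArg Subtype.val hz,
      sub_zero] at hz'
    exact Subtype.ext (norm_eq_zero.mp (by nlinarith [norm_nonneg (z : E)]))
  intro x hx
  obtain ⟨z, hz⟩ := (LinearMap.injective_iff_surjective_of_finrank_eq_finrank hdim).mp hinj ⟨x, hx⟩
  exact ⟨z, z.2, congrArg Subtype.val hz⟩

theorem norm_starProjection_orthogonal_le_of_finrank_eq (hdim : finrank ℝ U = finrank ℝ V)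
    {β : ℝ} (hβ0 : 0 ≤ β) (hβ : β < 1) (hU : ∀ x ∈ U, ‖Vᗮ.starProjection x‖ ≤ β * ‖x‖)
    {x : E} (hx : x ∈ V) : ‖Uᗮ.starProjection x‖ ≤ β / (1 - β) * ‖x‖ := by
  obtain ⟨z, hzU, rfl⟩ := surjOn_starProjection_of_finrank_eq hdim hβ hU hx
  have hz : ‖z‖ ≤ ‖V.starProjection z‖ + β * ‖z‖ :=
    calc ‖z‖ = ‖V.starProjection z + Vᗮ.starProjection z‖ := by
          rw [starProjection_orthogonal_val, add_sub_cancel]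
      _ ≤ _ := (norm_add_le _ _).trans (by gcongr; exact hU z hzU)
  have hUz : Uᗮ.starProjection (V.starProjection z) =
      -Uᗮ.starProjection (Vᗮ.starProjection z) := by
    rw [starProjection_orthogonal_val z, map_sub, starProjection_orthogonal_apply_eq_zero hzU,
      zero_sub, neg_neg]
  calc ‖Uᗮ.starProjection (V.starProjection z)‖ ≤ ‖Vᗮ.starProjection z‖ := by
        rw [hUz, norm_neg]; exact norm_starProjection_apply_le _ _
    _ ≤ β * ‖z‖ := hU z hzU
    _ ≤ β / (1 - β) * ‖V.starProjection z‖ := by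
        rw [div_mul_eq_mul_div, le_div_iff₀ (by linarith)]
        nlinarith

theorem norm_starProjection_sub_starProjection_le_three_mul [CompleteSpace E]
    (hdim : finrank ℝ U = finrank ℝ V) {β : ℝ} (hβ0 : 0 ≤ β) (hβ : β < 1 / 2)
    (hU : ∀ x ∈ U, ‖Vᗮ.starProjection x‖ ≤ β * ‖x‖) :
    ‖U.starProjection - V.starProjection‖ ≤ 3 * β := by
  have hD : β / (1 - β) ≤ 2 * β := by rw [div_le_iff₀ (by linarith)]; nlinarith
  have := norm_starProjection_sub_starProjection_le hβ0 (div_nonneg hβ0 (by linarith)) hU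
    fun x hx => norm_starProjection_orthogonal_le_of_finrank_eq hdim hβ0 (by linarith) hU hx
  linarith

end FiniteDimensional

theorem abs_inner_starProjection_mul_sq_le {U V : Submodule ℝ E} [U.HasOrthogonalProjection]
    [V.HasOrthogonalProjection] {e : E} (he : e ∈ U) (he1 : ‖e‖ = 1)
    (hmax : ∀ x ∈ U, ‖Vᗮ.starProjection x‖ ≤ ‖Vᗮ.starProjection e‖ * ‖x‖) (y : E) :
    |⟪U.starProjection y, e⟫| * ‖Vᗮ.starProjection e‖ ^ 2 ≤
      (‖Vᗮ.starProjection y‖ + ‖Uᗮ.starProjection y‖) * ‖Vᗮ.starProjection e‖ := by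
  set Q := Vᗮ.starProjection
  have hQQ (a b : E) : ⟪Q a, Q b⟫ = ⟪a, Q b⟫ := by
    rw [inner_starProjection_left_eq_right,
      starProjection_eq_self_iff.mpr (starProjection_apply_mem _ _)]
  have hsplit : ⟪U.starProjection y, e⟫ * ‖Q e‖ ^ 2 =
      ⟪Q y, Q e⟫ - ⟪Uᗮ.starProjection y, Q e⟫ := by
    rw [← inner_apply_apply_eq_of_forall_norm_apply_le he he1 hmax (starProjection_apply_mem U y),
      hQQ, hQQ, ← inner_sub_left, starProjection_orthogonal_val (K := U), sub_sub_cancel]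
  rw [← abs_of_nonneg (sq_nonneg ‖Q e‖), ← abs_mul, hsplit, add_mul]
  exact (abs_sub _ _).trans (add_le_add (abs_real_inner_le_norm _ _) (abs_real_inner_le_norm _ _))

theorem infDist_inf_orthogonal_span_singleton_le {U : Submodule ℝ E} {e x : E} (he : e ∈ U)
    (he1 : ‖e‖ = 1) (hx : x ∈ U) :
    Metric.infDist x ((ℝ ∙ e)ᗮ ⊓ U : Submodule ℝ E) ≤ |⟪x, e⟫| := by
  have hmem : (ℝ ∙ e)ᗮ.starProjection x ∈ (ℝ ∙ e)ᗮ ⊓ U := by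
    refine ⟨starProjection_apply_mem _ _, ?_⟩
    rw [starProjection_orthogonal_val, starProjection_unit_singleton ℝ he1]
    exact U.sub_mem hx (U.smul_mem _ he)
  calc Metric.infDist x ((ℝ ∙ e)ᗮ ⊓ U : Submodule ℝ E)
      ≤ dist x ((ℝ ∙ e)ᗮ.starProjection x) := Metric.infDist_le_dist_of_mem hmem
    _ = |⟪x, e⟫| := by
      rw [dist_eq_norm, starProjection_orthogonal_val, sub_sub_cancel,
        starProjection_unit_singleton ℝ he1, norm_smul, he1, mul_one, Real.norm_eq_abs,
        real_inner_comm]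

theorem finrank_inf_orthogonal_span_singleton {U : Submodule ℝ E} [FiniteDimensional ℝ U]
    {e : E} (he : e ∈ U) (he0 : e ≠ 0) :
    finrank ℝ ((ℝ ∙ e)ᗮ ⊓ U : Submodule ℝ E) = finrank ℝ U - 1 := by
  have h := finrank_add_inf_finrank_orthogonal ((span_singleton_le_iff_mem e U).mpr he)
  rw [finrank_span_singleton he0] at h
  omega

end Submodule

end

theorem projL_eq_starProjection {n : ℕ} (X : Submodule ℝ (EuclideanSpace ℝ (Fin n))) :
    projL X = X.starProjection :=
  rfl

/-- If `H₁, H₂ ∈ G(n,m)` satisfy `0 < ∠(H₁,H₂) = α < ε₁`, then there is an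
`(m−1)`-dimensional subspace `W ⊆ H₁` such that the projection of
`S(H₁,H₂) = {y : dist(y,H_i) ≤ 1, i = 1,2}` onto `H₁` is contained in the slab
`{y ∈ H₁ : dist(y,W) ≤ 5c₂/α}`, where `c₂ = 4m(10^m+1)` and `ε₁ = 1/(10(10^m+1))`. -/
theorem proj_slab {n m : ℕ}
    (H₁ H₂ : Submodule ℝ (EuclideanSpace ℝ (Fin n)))
    (h₁ : Module.finrank ℝ H₁ = m) (h₂ : Module.finrank ℝ H₂ = m)
    (α : ℝ) (hα : α = ‖projL H₁ - projL H₂‖)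
    (hα0 : 0 < α) (hα1 : α < 10⁻¹ * ((10 : ℝ) ^ m + 1)⁻¹)
    (S : Set (EuclideanSpace ℝ (Fin n)))
    (hS : S = {y | Metric.infDist y (H₁ : Set (EuclideanSpace ℝ (Fin n))) ≤ 1 ∧
                   Metric.infDist y (H₂ : Set (EuclideanSpace ℝ (Fin n))) ≤ 1}) :
    ∃ W : Submodule ℝ (EuclideanSpace ℝ (Fin n)), W ≤ H₁ ∧ Module.finrank ℝ W = m - 1 ∧
      ∀ y ∈ S, Metric.infDist (projL H₁ y) (W : Set (EuclideanSpace ℝ (Fin n))) ≤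
        5 * (4 * m * ((10 : ℝ) ^ m + 1)) / α := by
  subst hS
  simp only [projL_eq_starProjection] at hα ⊢
  have hm : m ≠ 0 := by
    rintro rfl
    simp [Submodule.finrank_eq_zero.mp h₁, Submodule.finrank_eq_zero.mp h₂] at hα
    linarith
  obtain ⟨e, he, he1, hmax⟩ := exists_unit_forall_norm_apply_le H₁
    (Submodule.finrank_eq_zero.not.mp (h₁ ▸ hm)) H₂ᗮ.starProjection
  set β := ‖H₂ᗮ.starProjection e‖
  have hαβ : α ≤ 3 * β := by
    rcases lt_or_ge β (1 / 2) with hβ | hβ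
    · exact hα ▸ Submodule.norm_starProjection_sub_starProjection_le_three_mul
        (h₁.trans h₂.symm) (norm_nonneg _) hβ hmax
    · have : ((10 : ℝ) ^ m + 1)⁻¹ ≤ 1 :=
        inv_le_one_of_one_le₀ (le_add_of_nonneg_left (by positivity))
      linarith
  have hβ : 0 < β := by linarith
  refine ⟨(ℝ ∙ e)ᗮ ⊓ H₁, inf_le_right,
    h₁ ▸ Submodule.finrank_inf_orthogonal_span_singleton he (by rintro rfl; simp at he1), ?_⟩
  rintro y ⟨hy₁, hy₂⟩
  rw [Submodule.infDist_eq_norm_starProjection_orthogonal] at hy₁ hy₂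
  have hslab := Submodule.abs_inner_starProjection_mul_sq_le he he1 hmax y
  calc Metric.infDist (H₁.starProjection y) ((ℝ ∙ e)ᗮ ⊓ H₁ : Submodule _ _)
      ≤ |⟪H₁.starProjection y, e⟫| :=
        Submodule.infDist_inf_orthogonal_span_singleton_le he he1 (H₁.starProjection_apply_mem y)
    _ ≤ 2 / β := by rw [le_div_iff₀ hβ]; nlinarith
    _ ≤ 6 / α := by rw [div_le_div_iff₀ hβ hα0]; linarith
    _ ≤ 5 * (4 * m * ((10 : ℝ) ^ m + 1)) / α := by
        have : (1 : ℝ) ≤ m := by exact_mod_cast Nat.one_le_iff_ne_zero.mpr hm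
        gcongr
        nlinarith [one_le_pow₀ (M₀ := ℝ) (a := 10) (n := m) (by norm_num)]
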